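/- For every A ⊆ E: r'(A ∪ {a, γ}) = r(A) + 1 if e ∈ cl(A), and r'(A ∪ {a, γ}) = r(A) + 2 if e ∉ cl(A). -/

import Mathlib

open Set

namespace ESSplit

variable {α : Type*}

/-- A circuit of a matroid: a minimal dependent set. -/
def IsCircuit (M : Matroid α) (C : Set α) : Prop :=
  M.Dep C ∧ ∀ D, D ⊂ C → M.Indep D

/-- A binary matroid: one representable over GF(2). -/
def IsBinary (M : Matroid α) : Prop :=
  ∃ (n : ℕ) (φ : α → (Fin n → ZMod 2)),
    ∀ I, I ⊆ M.E → (M.Indep I ↔ LinearIndependent (ZMod 2) (fun x : I => φ x.1))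

/-- An OX-circuit: a circuit meeting `X` in an odd number of elements. -/
def IsOX (M : Matroid α) (X C : Set α) : Prop :=
  IsCircuit M C ∧ Odd (C ∩ X).ncard

/-- An EX-circuit: a circuit meeting `X` in an even number of elements. -/
def IsEX (M : Matroid α) (X C : Set α) : Prop :=
  IsCircuit M C ∧ Even (C ∩ X).ncard

/-- `D` is a union of two disjoint OX-circuits containing no EX-circuit. -/
def OXUnion (M : Matroid α) (X D : Set α) : Prop :=
  ∃ C₁ C₂, IsOX M X C₁ ∧ IsOX M X C₂ ∧ Disjoint C₁ C₂ ∧ D = C₁ ∪ C₂ ∧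
    ¬ ∃ C₀, IsEX M X C₀ ∧ C₀ ⊆ D

/-- The description of the circuits of the es-splitting matroid `M_X^e`. -/
def ESCircuit (M : Matroid α) (X : Set α) (e a γ : α) (C : Set α) : Prop :=
  C = {e, a, γ} ∨
  IsEX M X C ∨
  (OXUnion M X C ∧ ∀ D, OXUnion M X D → D ⊆ C → D = C) ∨
  (∃ C₀, IsOX M X C₀ ∧ C = C₀ ∪ {a}) ∨
  (∃ C₀, IsOX M X C₀ ∧ e ∉ C₀ ∧ C = C₀ ∪ {e, γ}) ∨
  (∃ C₀, IsOX M X C₀ ∧ e ∈ C₀ ∧ C = (C₀ \ {e}) ∪ {γ}) ∨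
  (∃ C₀, IsCircuit M C₀ ∧ e ∈ C₀ ∧ Odd (((C₀ \ {e}) ∩ X).ncard) ∧
      C = (C₀ \ {e}) ∪ {a, γ})

/-- `M'` is the es-splitting matroid `M_X^e` of `M` (with new elements `a`, `γ`):
it has ground set `M.E ∪ {a, γ}` and its circuits are exactly as described. -/
def IsESSplit (M M' : Matroid α) (X : Set α) (e a γ : α) : Prop :=
  M'.E = M.E ∪ {a, γ} ∧ ∀ C, IsCircuit M' C ↔ ESCircuit M X e a γ C

/-- The set `T(A)`. -/
def T (M : Matroid α) (X : Set α) (e : α) (A : Set α) : Set α :=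
  {x | x ∈ M.E \ A ∧ x ≠ e ∧ ∃ C, IsOX M X C ∧ x ∈ C ∧ e ∈ C ∧ C ⊆ A ∪ {e, x}}

/-- The set `F(A)`. -/
def F (M : Matroid α) (X A : Set α) : Set α :=
  {x | x ∈ M.closure A \ A ∧ ∃ C, IsOX M X C ∧ x ∈ C ∧ C ⊆ M.closure A}

/-- The rank of a set `A` in a (finite) matroid: the maximum size of an
independent subset of `A`. -/
noncomputable def rk (M : Matroid α) (A : Set α) : ℕ :=
  sSup {n | ∃ I, M.Indep I ∧ I ⊆ A ∧ I.ncard = n}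

end ESSplit

open ESSplit

/-!
The triangle `{e, a, γ}` of `M'` makes `e` and `γ` interchangeable once `a` is present, so
`r'(A ∪ {a, γ}) = r'(A ∪ {e} ∪ {a})`, and it remains to see that adjoining `a` raises the rank of
any `Y ⊆ E` by exactly one: an `M`-basis `B` of `Y` stays independent with `a` added, since every
circuit of `M'` avoiding `γ` contains a circuit of `M`; and nothing more of `Y` can be added, since
an `M`-circuit `C` is itself a circuit of `M'` when it meets `X` evenly, and `C ∪ {a}` is one
otherwise. Finally `r(A ∪ {e})` is `r(A)` or `r(A) + 1` according as `e ∈ cl(A)`.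
-/

namespace Matroid

variable {α : Type*} {M : Matroid α} {C Y : Set α} {x : α}

lemma eRk_insert_eq_of_mem_closure (hx : x ∈ M.closure Y) : M.eRk (insert x Y) = M.eRk Y := by
  rw [← eRk_closure_eq, closure_insert_eq_of_mem_closure hx, eRk_closure_eq]

lemma IsCircuit.eRk_insert_eq (hC : M.IsCircuit C) (hxC : x ∈ C) (hCY : C ⊆ insert x Y) :
    M.eRk (insert x Y) = M.eRk Y :=
  eRk_insert_eq_of_mem_closure <| M.closure_subset_closure (sdiff_singleton_subset_iff.2 hCY)
    (hC.mem_closure_sdiff_singleton_of_mem hxC)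

end Matroid

namespace ESSplit

variable {α : Type*} {M M' : Matroid α} {X B C S Y : Set α} {e a γ : α}

lemma isCircuit_iff_isCircuit : IsCircuit M C ↔ M.IsCircuit C :=
  Matroid.isCircuit_iff_forall_ssubset.symm

lemma natCast_rk_eq_eRk (hfin : M.E.Finite) (Y : Set α) : (rk M Y : ℕ∞) = M.eRk Y := by
  obtain ⟨I, hI⟩ := M.exists_isBasis' Y
  have hfinite : ∀ {J}, M.Indep J → J.Finite := fun hJ ↦ hfin.subset hJ.subset_ground
  have hmax : IsGreatest {n | ∃ J, M.Indep J ∧ J ⊆ Y ∧ J.ncard = n} I.ncard := by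
    refine ⟨⟨I, hI.indep, hI.subset, rfl⟩, ?_⟩
    rintro _ ⟨J, hJ, hJY, rfl⟩
    rw [← Nat.cast_le (α := ℕ∞), (hfinite hJ).cast_ncard_eq, (hfinite hI.indep).cast_ncard_eq,
      hI.encard_eq_eRk]
    exact hJ.encard_le_eRk_of_subset hJY
  rw [rk, hmax.csSup_eq, (hfinite hI.indep).cast_ncard_eq, hI.encard_eq_eRk]

namespace IsESSplit

lemma isCircuit_triangle (hs : IsESSplit M M' X e a γ) : M'.IsCircuit {e, a, γ} :=
  isCircuit_iff_isCircuit.1 <| (hs.2 _).2 (Or.inl rfl)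

lemma isCircuit_of_even (hs : IsESSplit M M' X e a γ) (hC : M.IsCircuit C)
    (hev : Even (C ∩ X).ncard) : M'.IsCircuit C :=
  isCircuit_iff_isCircuit.1 <| (hs.2 _).2 <| Or.inr <| Or.inl ⟨isCircuit_iff_isCircuit.2 hC, hev⟩

lemma isCircuit_union_singleton_a (hs : IsESSplit M M' X e a γ) (hC : M.IsCircuit C)
    (hodd : Odd (C ∩ X).ncard) : M'.IsCircuit (C ∪ {a}) :=
  isCircuit_iff_isCircuit.1 <| (hs.2 _).2 <| Or.inr <| Or.inr <| Or.inr <| Or.inl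
    ⟨C, ⟨isCircuit_iff_isCircuit.2 hC, hodd⟩, rfl⟩

lemma exists_isCircuit_subset_of_γ_notMem (hs : IsESSplit M M' X e a γ) (hC : M'.IsCircuit C)
    (hγC : γ ∉ C) : ∃ C₀ ⊆ C, M.IsCircuit C₀ := by
  simp_rw [← isCircuit_iff_isCircuit]
  rcases (hs.2 C).1 (isCircuit_iff_isCircuit.2 hC) with
    rfl | hEX | ⟨⟨C₁, -, hC₁, -, -, rfl, -⟩, -⟩ | ⟨C₀, hC₀, rfl⟩ | ⟨_, -, -, rfl⟩ |
      ⟨_, -, -, rfl⟩ | ⟨_, -, -, -, rfl⟩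
  · simp at hγC
  · exact ⟨C, subset_rfl, hEX.1⟩
  · exact ⟨C₁, subset_union_left, hC₁.1⟩
  · exact ⟨C₀, subset_union_left, hC₀.1⟩
  all_goals simp at hγC

lemma indep_insert_a (hs : IsESSplit M M' X e a γ) (haE : a ∉ M.E) (hγE : γ ∉ M.E) (haγ : a ≠ γ)
    (hI : M.Indep B) : M'.Indep (insert a B) := by
  have hground : insert a B ⊆ M'.E := by
    rw [hs.1]
    exact insert_subset (by simp) (hI.subset_ground.trans subset_union_left)
  by_contra hdep
  obtain ⟨C, hCB, hC⟩ := ((Matroid.not_indep_iff hground).1 hdep).exists_isCircuit_subset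
  have hγC : γ ∉ C := fun hγ ↦ (mem_insert_iff.1 (hCB hγ)).elim (haγ ·.symm)
    (hγE <| hI.subset_ground ·)
  obtain ⟨C₀, hC₀C, hC₀⟩ := hs.exists_isCircuit_subset_of_γ_notMem hC hγC
  have hC₀B : C₀ ⊆ B :=
    (subset_insert_iff_of_notMem (haE <| hC₀.subset_ground ·)).1 (hC₀C.trans hCB)
  exact hC₀.dep.not_indep (hI.subset hC₀B)

lemma indep_of_indep_insert_a (hs : IsESSplit M M' X e a γ) (hSE : S ⊆ M.E)
    (hS : M'.Indep (insert a S)) : M.Indep S := by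
  by_contra hdep
  obtain ⟨C, hCS, hC⟩ := ((Matroid.not_indep_iff hSE).1 hdep).exists_isCircuit_subset
  rcases Nat.even_or_odd (C ∩ X).ncard with hev | hodd
  · exact (hs.isCircuit_of_even hC hev).dep.not_indep (hS.subset (hCS.trans (subset_insert _ _)))
  · refine (hs.isCircuit_union_singleton_a hC hodd).dep.not_indep (hS.subset ?_)
    rw [union_singleton]
    exact insert_subset_insert hCS

lemma isBasis_insert_a (hs : IsESSplit M M' X e a γ) (haE : a ∉ M.E) (hγE : γ ∉ M.E) (haγ : a ≠ γ)
    (hB : M.IsBasis B Y) : M'.IsBasis (insert a B) (insert a Y) := by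
  refine (hs.indep_insert_a haE hγE haγ hB.indep).isBasis_of_forall_insert
    (insert_subset_insert hB.subset) fun x hx ↦ ?_
  have hxY : x ∈ Y \ B := by
    simp only [mem_sdiff, mem_insert_iff, not_or] at hx
    exact ⟨hx.1.resolve_left hx.2.1, hx.2.2⟩
  have hground : insert x (insert a B) ⊆ M'.E := by
    rw [hs.1, insert_comm]
    exact insert_subset (by simp) <|
      (insert_subset hxY.1 hB.subset).trans (hB.subset_ground.trans subset_union_left)
  refine (Matroid.not_indep_iff hground).1 fun hind ↦ (hB.insert_dep hxY).not_indep ?_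
  rw [insert_comm] at hind
  exact hs.indep_of_indep_insert_a (insert_subset (hB.subset_ground hxY.1) hB.indep.subset_ground)
    hind

lemma eRk_insert_a (hs : IsESSplit M M' X e a γ) (haE : a ∉ M.E) (hγE : γ ∉ M.E) (haγ : a ≠ γ)
    (hY : Y ⊆ M.E) : M'.eRk (insert a Y) = M.eRk Y + 1 := by
  obtain ⟨B, hB⟩ := M.exists_isBasis Y hY
  rw [← (hs.isBasis_insert_a haE hγE haγ hB).encard_eq_eRk, ← hB.encard_eq_eRk,
    encard_insert_of_notMem (haE <| hB.indep.subset_ground ·)]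

lemma eRk_union_a_γ (hs : IsESSplit M M' X e a γ) (A : Set α) :
    M'.eRk (A ∪ {a, γ}) = M'.eRk (insert a (insert e A)) := by
  calc M'.eRk (A ∪ {a, γ})
      = M'.eRk (insert e (A ∪ {a, γ})) :=
        (hs.isCircuit_triangle.eRk_insert_eq (by simp) (by simp [insert_subset_iff])).symm
    _ = M'.eRk (insert γ (insert a (insert e A))) := by
        congr 1
        ext
        simp only [mem_insert_iff, mem_union, mem_singleton_iff]
        tauto
    _ = M'.eRk (insert a (insert e A)) :=
        hs.isCircuit_triangle.eRk_insert_eq (by simp) (by simp [insert_subset_iff])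

end IsESSplit

end ESSplit

theorem rank_union_a_gamma_es_splitting_general
    {α : Type*} (M M' : Matroid α) (X : Set α) (e a γ : α)
    (hfin : M.E.Finite)
    (hXE : X ⊆ M.E) (heX : e ∈ X) (haE : a ∉ M.E) (hγE : γ ∉ M.E) (haγ : a ≠ γ)
    (hsplit : IsESSplit M M' X e a γ)
    (A : Set α) (hAE : A ⊆ M.E) :
    (e ∈ M.closure A → rk M' (A ∪ {a, γ}) = rk M A + 1) ∧
    (e ∉ M.closure A → rk M' (A ∪ {a, γ}) = rk M A + 2) := by
  have hfin' : M'.E.Finite := hsplit.1 ▸ hfin.union (toFinite _)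
  have heE : e ∈ M.E := hXE heX
  have hrk : (rk M' (A ∪ {a, γ}) : ℕ∞) = M.eRk (insert e A) + 1 := by
    rw [natCast_rk_eq_eRk hfin', hsplit.eRk_union_a_γ,
      hsplit.eRk_insert_a haE hγE haγ (insert_subset heE hAE)]
  refine ⟨fun he ↦ ?_, fun he ↦ ?_⟩
  · rw [← Nat.cast_inj (R := ℕ∞), hrk, Matroid.eRk_insert_eq_of_mem_closure he,
      ← natCast_rk_eq_eRk hfin]
    norm_cast
  · rw [← Nat.cast_inj (R := ℕ∞), hrk, Matroid.eRk_insert_eq_add_one ⟨heE, he⟩,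
      ← natCast_rk_eq_eRk hfin, add_assoc]
    norm_cast

theorem rank_union_a_gamma_es_splitting
    {α : Type*} (M M' : Matroid α) (X : Set α) (e a γ : α)
    (hfin : M.E.Finite) (hbin : IsBinary M)
    (hXE : X ⊆ M.E) (heX : e ∈ X) (haE : a ∉ M.E) (hγE : γ ∉ M.E) (haγ : a ≠ γ)
    (hsplit : IsESSplit M M' X e a γ)
    (A : Set α) (hAE : A ⊆ M.E) :
    (e ∈ M.closure A → rk M' (A ∪ {a, γ}) = rk M A + 1) ∧
    (e ∉ M.closure A → rk M' (A ∪ {a, γ}) = rk M A + 2) :=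
  rank_union_a_gamma_es_splitting_general M M' X e a γ hfin hXE heX haE hγE haγ hsplit A hAE
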